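/- arXiv:0901.3119 — 4 statements merged into one kernel-verified Lean document; each statement's English description precedes it below -/
import Mathlib

section
/- If C and C' are stacks of n ≥ 2 burnt pancakes and C' is obtained from C by a single flip, then the number of deep blocks changes by at most one: |b(C') − b(C)| ≤ 1. -/
/-- A stack of burnt pancakes, listed from top to bottom.  Each pancake is a pair
`(size, b)` where `b = true` means the pancake lies burnt-side up
and `b = false` means burnt-side down. -/
abbrev BStack := List (ℕ × Bool)

/-- An `i`-flip: the top `i` pancakes are reversed and their orientations switched. -/
def bflip (i : ℕ) (C : BStack) : BStack :=
  ((C.take i).reverse.map fun p => (p.1, !p.2)) ++ C.drop i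

/-- The sorted stack `I n`: pancakes `1,…,n` from top to bottom, all burnt-side down. -/
def Istk (n : ℕ) : BStack := (List.range n).map fun k => (k + 1, false)

/-- The stack `-I n`: pancakes `1,…,n` from top to bottom, all burnt-side up. -/
def negIstk (n : ℕ) : BStack := (List.range n).map fun k => (k + 1, true)

/-- `C` is a stack of `n` burnt pancakes: its sizes form a permutation of `{1,…,n}`. -/
def IsBStack (n : ℕ) (C : BStack) : Prop :=
  (C.map Prod.fst).Perm ((List.range n).map (· + 1))

/-- `g C`: the minimum number of flips transforming `C` into the sorted stack `I n`. -/
noncomputable def gB (C : BStack) : ℕ :=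
  sInf { m | ∃ s : List ℕ, (∀ i ∈ s, 1 ≤ i ∧ i ≤ C.length) ∧ s.length = m ∧
      s.foldl (fun D i => bflip i D) C = Istk C.length }

/-- `-C`: switch the orientation of every pancake, keeping the order of pancakes. -/
def negStk (C : BStack) : BStack := C.map fun p => (p.1, !p.2)

/-- Two burnt pancakes on consecutive positions (`p` directly above `q`) are adjacent iff
they form a substack of `I n` (both burnt-side down, sizes increasing by one downwards)
or of its full reversal (both burnt-side up, sizes decreasing by one downwards). -/
def adjPair (p q : ℕ × Bool) : Bool :=
  (!p.2 && !q.2 && (q.1 == p.1 + 1)) || (p.2 && q.2 && (p.1 == q.1 + 1))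

/-- The list of adjacency indicators between consecutive positions of `C`. -/
def adjSeq (C : BStack) : List Bool := (C.zip C.tail).map fun pq => adjPair pq.1 pq.2

/-- `a C`: the number of adjacencies of `C`. -/
def aB (C : BStack) : ℕ := (adjSeq C).count true

/-- `b C`: the number of deep blocks of `C`.  A block is a maximal run of pairwise
adjacent consecutive pancakes (at least two pancakes); it is deep iff it does not contain
the topmost pancake, i.e. iff its run of adjacencies starts just after a non-adjacency. -/
def bB (C : BStack) : ℕ :=
  (((adjSeq C).zip (adjSeq C).tail).filter fun pq => !pq.1 && pq.2).length

/-!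
A deep block of `C` begins exactly at an ascent `false, true` of its adjacency sequence.
An `i`-flip reverses the adjacency sequence of the top `i` pancakes (reversing and negating
a pair of pancakes preserves adjacency), leaves that of the bottom part alone, and changes
only the single adjacency across position `i`. Reversing a Boolean word changes its number
of ascents by `[first letter] - [last letter]`, so the count of ascents can only change at
the boundary letters, and a finite case check bounds the total change by one.
-/

def ascents (s : List Bool) : ℕ := ((s.zip s.tail).filter fun pq => !pq.1 && pq.2).length

@[simp] lemma ascents_nil : ascents [] = 0 := rfl

@[simp] lemma ascents_singleton (a : Bool) : ascents [a] = 0 := rfl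

@[simp] lemma ascents_cons_cons (a b : Bool) (l : List Bool) :
    ascents (a :: b :: l) = (!a && b).toNat + ascents (b :: l) := by
  cases h : (!a && b) <;> simp [ascents, h, Nat.add_comm]

-- The defaults make the junction term vanish when `t` or `u` is empty.
lemma ascents_append (t u : List Bool) :
    ascents (t ++ u) = ascents t + (!t.getLastD true && u.headD false).toNat + ascents u := by
  induction t with
  | nil => simp
  | cons a t ih =>
    cases t with
    | nil => cases u <;> simp
    | cons b t =>
      simp only [List.cons_append, ascents_cons_cons] at ih ⊢
      simp [ih]
      omega

lemma ascents_reverse (t : List Bool) :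
    ascents t.reverse + (t.getLastD true).toNat = ascents t + (t.headD true).toNat := by
  induction t with
  | nil => simp
  | cons a t ih =>
    rw [List.reverse_cons, ascents_append]
    cases t with
    | nil => simp
    | cons b t => cases a <;> cases b <;> simp_all <;> omega

lemma List.getLastD_reverse {α : Type*} (l : List α) (d : α) :
    l.reverse.getLastD d = l.headD d := by
  cases l <;> simp [List.getLastD_eq_getLast?]

lemma abs_ascents_reverse_append_sub_le (t u : List Bool) (v w : Option Bool) :
    |(ascents (t.reverse ++ w.toList ++ u) : ℤ) - ascents (t ++ v.toList ++ u)| ≤ 1 := by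
  have hrev := ascents_reverse t
  have hcons (x : Bool) : ascents (x :: u) = (!x && u.headD false).toNat + ascents u := by
    simpa using ascents_append [x] u
  rw [abs_le]
  -- Only the boundary letters of `t` and `u` and the junction letters remain.
  rcases v with _ | y <;> rcases w with _ | x <;>
  simp only [List.append_assoc, ascents_append t.reverse, ascents_append t,
    List.getLastD_reverse, Option.toList_none, Option.toList_some, List.nil_append,
    List.cons_append, hcons, List.headD_cons] <;>
  generalize t.headD true = h at * <;>
  generalize t.getLastD true = l at * <;>
  generalize u.headD false = a at * <;>
  cases h <;> cases l <;> cases a <;> (try cases x) <;> (try cases y) <;> simp at hrev ⊢ <;> omega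

@[simp] lemma adjSeq_nil : adjSeq [] = [] := rfl

@[simp] lemma adjSeq_singleton (p : ℕ × Bool) : adjSeq [p] = [] := rfl

@[simp] lemma adjSeq_cons_cons (p q : ℕ × Bool) (C : BStack) :
    adjSeq (p :: q :: C) = adjPair p q :: adjSeq (q :: C) := rfl

lemma adjSeq_append (A B : BStack) :
    adjSeq (A ++ B) = adjSeq A ++ (Option.map₂ adjPair A.getLast? B.head?).toList ++ adjSeq B := by
  induction A with
  | nil => simp
  | cons a A ih =>
    cases A with
    | nil => cases B <;> simp
    | cons c A => simp_all

lemma adjPair_neg_swap (p q : ℕ × Bool) : adjPair (q.1, !q.2) (p.1, !p.2) = adjPair p q := by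
  obtain ⟨p1, p2⟩ := p
  obtain ⟨q1, q2⟩ := q
  cases p2 <;> cases q2 <;> simp [adjPair]

lemma adjSeq_negStk_reverse (A : BStack) : adjSeq (negStk A.reverse) = (adjSeq A).reverse := by
  induction A with
  | nil => rfl
  | cons a A ih =>
    rw [List.reverse_cons, negStk, List.map_append, ← negStk, adjSeq_append, ih,
      ← List.singleton_append (l := A), adjSeq_append]
    cases A <;> simp [negStk, adjPair_neg_swap]

lemma bflip_eq_negStk_append (i : ℕ) (C : BStack) :
    bflip i C = negStk (C.take i).reverse ++ C.drop i := rfl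

lemma bB_eq_ascents_adjSeq (C : BStack) : bB C = ascents (adjSeq C) := rfl

theorem deep_blocks_change_le_one_general (C : BStack) (i : ℕ) :
    |(bB (bflip i C) : ℤ) - (bB C : ℤ)| ≤ 1 := by
  have hC := adjSeq_append (C.take i) (C.drop i)
  rw [List.take_append_drop] at hC
  rw [bB_eq_ascents_adjSeq, bB_eq_ascents_adjSeq, bflip_eq_negStk_append, adjSeq_append,
    adjSeq_negStk_reverse, hC]
  exact abs_ascents_reverse_append_sub_le _ _ _ _

/-- If `C` is a stack of `n ≥ 2` burnt pancakes and `C'` is obtained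
from `C` by a single flip, then the number of deep blocks changes by at most one:
`|b(C') − b(C)| ≤ 1`. -/
theorem deep_blocks_change_le_one (n : ℕ) (hn : 2 ≤ n) (C : BStack)
    (hC : IsBStack n C) (i : ℕ) (hi1 : 1 ≤ i) (hi2 : i ≤ n) :
    |(bB (bflip i C) : ℤ) - (bB C : ℤ)| ≤ 1 :=
  deep_blocks_change_le_one_general C i
end

section
/- For every positive integer n, the expected number of adjacencies in a uniformly random stack of n burnt pancakes equals (1/2)·(n−1)/n; consequently, fewer than half of all n!·2^n stacks of n burnt pancakes contain an adjacency. -/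
/-- The stack of `n` burnt pancakes determined by a permutation `π` (the pancake at the
`j`-th position from the top has size `π j + 1`) and an orientation vector `w`
(`w j = true` iff the pancake at position `j` lies burnt-side up). -/
def toBStack {n : ℕ} (π : Equiv.Perm (Fin n)) (w : Fin n → Bool) : BStack :=
  (List.finRange n).map fun j => ((π j : ℕ) + 1, w j)

/-! By linearity of expectation, `∑ a` is the sum over the `n - 1` pairs of consecutive positions
`i, j` of the number of stacks with an adjacency there, i.e. with both pancakes burnt-side down
and `π j = π i + 1`, or both up and `π i = π j + 1`. Since the permutation group is
`2`-transitive, `(π i, π j)` is uniformly distributed over the `n (n - 1)` ordered pairs of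
distinct values, `n - 1` of which are successive, and `(w i, w j)` is uniform on `Bool × Bool`;
so each pair of positions contributes `2 · (1 / n) · (1 / 4) = 1 / (2 n)` to the expectation.
Every stack with an adjacency has `a ≥ 1`, so their proportion is at most the expectation
`(n - 1) / (2 n) < 1 / 2`. -/

open Finset Equiv
open scoped Nat

theorem count_true_ofFn {n : ℕ} (f : Fin n → Bool) : (List.ofFn f).count true = #{k | f k} := by
  rw [List.ofFn_eq_map, List.count, List.countP_map, Finset.card_def, Finset.filter_val,
    Fin.univ_def]
  simp only [beq_true, List.countP_eq_length_filter, Multiset.filter_coe, Bool.decide_eq_true,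
    Multiset.coe_card]
  rfl

theorem card_filter_pos_le_sum {ι : Type*} [Fintype ι] (f : ι → ℕ) :
    #{x | 0 < f x} ≤ ∑ x, f x := by
  rw [card_filter]
  exact sum_le_sum fun x _ => by split_ifs <;> omega

section PairCounts

variable {α β : Type*} [Fintype α] [DecidableEq α] {i j : α}

theorem card_perm_apply_pair_eq (hij : i ≠ j) {p : α × α} (hp : p.1 ≠ p.2) :
    #{π : Perm α | (π i, π j) = p} = #{π : Perm α | (π i, π j) = (i, j)} := by
  obtain ⟨σ, hσi, hσj⟩ := MulAction.is_two_pretransitive_iff.mp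
    (Perm.isMultiplyPretransitive α 2) hij hp
  rw [Perm.smul_def] at hσi hσj
  refine card_equiv (Equiv.mulLeft σ⁻¹) fun π => ?_
  simp only [mem_filter, mem_univ, true_and, coe_mulLeft, Perm.mul_apply, Prod.ext_iff,
    Perm.inv_eq_iff_eq, hσi, hσj]

theorem card_perm_apply_pair_mem_mul (hij : i ≠ j) {R : Finset (α × α)}
    (hR : R ⊆ univ.offDiag) :
    #{π : Perm α | (π i, π j) ∈ R} * #(univ.offDiag : Finset (α × α)) =
      #R * (Fintype.card α)! := by
  set c := #{π : Perm α | (π i, π j) = (i, j)}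
  have card_filter_mem {R : Finset (α × α)} (hR : R ⊆ univ.offDiag) :
      #{π : Perm α | (π i, π j) ∈ R} = #R * c := by
    rw [card_eq_sum_card_fiberwise (t := R) (f := fun π : Perm α => (π i, π j))
      (s := {π : Perm α | (π i, π j) ∈ R}) (fun π hπ => (mem_filter.mp hπ).2),
      sum_const_nat]
    intro p hp
    rw [filter_filter]
    convert card_perm_apply_pair_eq hij (mem_offDiag.mp (hR hp)).2.2 using 2
    ext π
    simp only [mem_filter, mem_univ, true_and, and_iff_right_iff_imp]
    rintro rfl
    exact hp
  have card_univ_perm : (Fintype.card α)! = #(univ.offDiag : Finset (α × α)) * c := by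
    rw [← card_filter_mem subset_rfl, ← Fintype.card_perm, ← card_univ]
    congr 1
    ext π
    simp [hij]
  rw [card_filter_mem hR, card_univ_perm]
  ring

variable [Fintype β] [DecidableEq β]

theorem card_fun_apply_pair_eq (hij : i ≠ j) (p q : β × β) :
    #{w : α → β | (w i, w j) = p} = #{w : α → β | (w i, w j) = q} := by
  let τ : α → Perm β := fun k =>
    if k = i then swap p.1 q.1 else if k = j then swap p.2 q.2 else 1
  refine card_equiv (Equiv.piCongrRight τ) fun w => ?_
  simp [τ, hij.symm, Prod.ext_iff, swap_apply_eq_iff]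

theorem card_fun_apply_pair_mul (hij : i ≠ j) (p : β × β) :
    #{w : α → β | (w i, w j) = p} * Fintype.card β ^ 2 =
      Fintype.card β ^ Fintype.card α := by
  calc #{w : α → β | (w i, w j) = p} * Fintype.card β ^ 2
      = ∑ q : β × β, #{w : α → β | (w i, w j) = q} := by
        simp only [card_fun_apply_pair_eq hij _ p, sum_const, card_univ, Fintype.card_prod,
          smul_eq_mul]
        ring
    _ = #(univ : Finset (α → β)) :=
        (card_eq_sum_card_fiberwise (f := fun w : α → β => (w i, w j)) (by simp)).symm
    _ = Fintype.card β ^ Fintype.card α := by rw [card_univ, Fintype.card_fun]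

end PairCounts

theorem card_filter_val_eq_val_add_one (n : ℕ) :
    #{p : Fin n × Fin n | (p.2 : ℕ) = p.1 + 1} = n - 1 := by
  cases n with
  | zero => simp
  | succ m =>
    have hmap : ({p : Fin (m + 1) × Fin (m + 1) | (p.2 : ℕ) = p.1 + 1} : Finset _) =
        univ.map ⟨fun a : Fin m => (a.castSucc, a.succ), fun a b h => by simpa using h⟩ := by
      ext ⟨a, b⟩
      simp only [mem_filter, mem_univ, true_and, mem_map]
      constructor
      · intro h
        exact ⟨⟨a, by omega⟩, Prod.ext (Fin.ext rfl) (Fin.ext h.symm)⟩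
      · rintro ⟨c, rfl, rfl⟩
        simp
    rw [hmap, card_map, card_univ, Fintype.card_fin, Nat.add_sub_cancel]

theorem card_perm_apply_eq_apply_add_one {n : ℕ} {i j : Fin n} (hij : i ≠ j) :
    n * #{π : Perm (Fin n) | (π j : ℕ) = π i + 1} = n ! := by
  have h := card_perm_apply_pair_mem_mul hij
    (R := {p : Fin n × Fin n | (p.2 : ℕ) = p.1 + 1}) fun p hp => by
      simp only [mem_filter, mem_univ, true_and] at hp
      simp only [mem_offDiag, mem_univ, ne_eq, Fin.ext_iff, true_and]
      omega
  simp only [mem_filter, mem_univ, true_and, offDiag_card, card_univ, Fintype.card_fin,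
    card_filter_val_eq_val_add_one] at h
  have hn : 2 ≤ n := by
    have := Fin.val_ne_of_ne hij
    omega
  rw [← Nat.mul_sub_one] at h
  exact Nat.eq_of_mul_eq_mul_left (by omega : 0 < n - 1) (by rw [← h]; ring)

theorem adjPair_eq_true_iff (a b : ℕ) (x y : Bool) :
    adjPair (a, x) (b, y) = true ↔
      (x = false ∧ y = false ∧ b = a + 1) ∨ (x = true ∧ y = true ∧ a = b + 1) := by
  cases x <;> cases y <;> simp [adjPair]

theorem card_adjPair_apply {n : ℕ} {i j : Fin n} (hij : i ≠ j) :
    2 * n * #{pw : Perm (Fin n) × (Fin n → Bool) |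
        adjPair ((pw.1 i : ℕ) + 1, pw.2 i) ((pw.1 j : ℕ) + 1, pw.2 j)} = n ! * 2 ^ n := by
  let up : Finset (Perm (Fin n)) := {π | (π j : ℕ) = π i + 1}
  let down : Finset (Perm (Fin n)) := {π | (π i : ℕ) = π j + 1}
  let bothDown : Finset (Fin n → Bool) := {w | (w i, w j) = (false, false)}
  let bothUp : Finset (Fin n → Bool) := {w | (w i, w j) = (true, true)}
  have hsplit : ({pw : Perm (Fin n) × (Fin n → Bool) |
        adjPair ((pw.1 i : ℕ) + 1, pw.2 i) ((pw.1 j : ℕ) + 1, pw.2 j)} : Finset _) =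
      up ×ˢ bothDown ∪ down ×ˢ bothUp := by
    ext ⟨π, w⟩
    simp only [adjPair_eq_true_iff, Nat.add_right_cancel_iff, mem_filter, mem_univ, true_and,
      Prod.mk.injEq, mem_union, mem_product, up, bothDown, down, bothUp]
    tauto
  have hdisj : Disjoint (up ×ˢ bothDown) (down ×ˢ bothUp) := by
    refine disjoint_product.mpr (Or.inr (disjoint_filter.mpr fun w _ hfalse htrue => ?_))
    simp only [Prod.mk.injEq] at hfalse htrue
    simp [hfalse.1] at htrue
  have hup : n * #up = n ! := card_perm_apply_eq_apply_add_one hij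
  have hdown : n * #down = n ! := card_perm_apply_eq_apply_add_one hij.symm
  have hbothDown : #bothDown * 2 ^ 2 = 2 ^ n := by
    have h := card_fun_apply_pair_mul hij (false, false)
    rwa [Fintype.card_bool, Fintype.card_fin] at h
  have hbothUp : #bothUp * 2 ^ 2 = 2 ^ n := by
    have h := card_fun_apply_pair_mul hij (true, true)
    rwa [Fintype.card_bool, Fintype.card_fin] at h
  rw [hsplit, card_union_of_disjoint hdisj, card_product, card_product]
  nlinarith

theorem adjSeq_ofFn {m : ℕ} (g : Fin (m + 1) → ℕ × Bool) :
    adjSeq (List.ofFn g) = List.ofFn fun k : Fin m => adjPair (g k.castSucc) (g k.succ) := by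
  apply List.ext_getElem
  · simp [adjSeq]
  · intro k hk _
    simp only [adjSeq, List.getElem_map, List.getElem_zip, List.getElem_tail, List.getElem_ofFn]
    rfl

theorem aB_toBStack {m : ℕ} (π : Perm (Fin (m + 1))) (w : Fin (m + 1) → Bool) :
    aB (toBStack π w) = #{k : Fin m |
      adjPair ((π k.castSucc : ℕ) + 1, w k.castSucc) ((π k.succ : ℕ) + 1, w k.succ)} := by
  rw [aB, toBStack, ← List.ofFn_eq_map, adjSeq_ofFn, count_true_ofFn]

theorem sum_aB_toBStack (m : ℕ) :
    2 * (m + 1) * ∑ π : Perm (Fin (m + 1)), ∑ w : Fin (m + 1) → Bool, aB (toBStack π w) =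
      m * ((m + 1)! * 2 ^ (m + 1)) := by
  have hswap : ∑ π : Perm (Fin (m + 1)), ∑ w : Fin (m + 1) → Bool, aB (toBStack π w) =
      ∑ k : Fin m, #{pw : Perm (Fin (m + 1)) × (Fin (m + 1) → Bool) |
        adjPair ((pw.1 k.castSucc : ℕ) + 1, pw.2 k.castSucc)
          ((pw.1 k.succ : ℕ) + 1, pw.2 k.succ)} := by
    simp only [aB_toBStack, card_filter]
    rw [← Fintype.sum_prod_type', sum_comm]
  rw [hswap, mul_sum, sum_congr rfl fun k _ => card_adjPair_apply Fin.castSucc_lt_succ.ne,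
    sum_const, card_univ, Fintype.card_fin, smul_eq_mul]

/-- For every positive integer `n`, the expected number of adjacencies
in a uniformly random stack of `n` burnt pancakes equals `(1/2)·(n−1)/n`; consequently,
fewer than half of all `n!·2^n` stacks of `n` burnt pancakes contain an adjacency. -/
theorem expected_adjacencies (n : ℕ) (hn : 1 ≤ n) :
    (∑ π : Equiv.Perm (Fin n), ∑ w : Fin n → Bool, (aB (toBStack π w) : ℚ)) /
        (n.factorial * 2 ^ n) = (1 / 2) * (((n : ℚ) - 1) / n) ∧
    2 * Nat.card {pw : Equiv.Perm (Fin n) × (Fin n → Bool) //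
        0 < aB (toBStack pw.1 pw.2)} < n.factorial * 2 ^ n := by
  obtain ⟨m, rfl⟩ : ∃ m, n = m + 1 := ⟨n - 1, by omega⟩
  have hsum := sum_aB_toBStack m
  refine ⟨?_, ?_⟩
  · have hsumℚ : (2 * (m + 1) : ℚ) * ∑ π : Perm (Fin (m + 1)), ∑ w : Fin (m + 1) → Bool,
        (aB (toBStack π w) : ℚ) = m * ((m + 1)! * 2 ^ (m + 1)) := by
      exact_mod_cast hsum
    field_simp
    push_cast
    linarith
  · have hcard : Nat.card {pw : Perm (Fin (m + 1)) × (Fin (m + 1) → Bool) //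
        0 < aB (toBStack pw.1 pw.2)} ≤
          ∑ π : Perm (Fin (m + 1)), ∑ w : Fin (m + 1) → Bool, aB (toBStack π w) := by
      rw [Nat.card_eq_fintype_card, Fintype.card_subtype, ← Fintype.sum_prod_type']
      exact card_filter_pos_le_sum _
    have hpos : 0 < (m + 1)! * 2 ^ (m + 1) := by positivity
    refine Nat.lt_of_mul_lt_mul_left (a := m + 1) ?_
    nlinarith
end

section
/- For every integer n ≥ 16, the number of stacks of n burnt pancakes that have no adjacency and can be sorted in at most n − 1 + n/(4·log₂ n) flips is less than (1/4)·n!·2^n; consequently, at least half of the n!·2^n/2 or more stacks with no adjacency require more than n − 1 + n/(4·log₂ n) flips. -/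
/-!
A flip changes at most one adjacency, and `I n` has `n - 1` of them, so a sequence of at most
`n - 1 + k` flips sorting a stack without adjacencies consists of at least `n - 1` flips that create
an adjacency and at most `k` others. Read backwards from `I n`, a creating flip is determined by
which adjacency of the resulting stack it created, and the stack produced by the `t`-th flip has
at most `t` adjacencies; any other flip is determined by its size. With `m = n - 1 + k` this
encodes the stack by one of at most `(m + 1) ((n + 1) (m + 1))^k m!` codes, which for
`k = ⌊n / (4 log₂ n)⌋` is less than `n! 2^n / 4`. On the other hand, for each of the `n - 1` pairs
of consecutive positions at most `n! 2^n / (2 (n - 1))` stacks are adjacent there, so at least half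
of all stacks have no adjacency.
-/

open Equiv Nat Relation

namespace BurntPancake

section Flips

theorem bflip_eq (i : ℕ) (C : BStack) : bflip i C = negStk (C.take i).reverse ++ C.drop i := rfl

@[simp] theorem length_negStk (C : BStack) : (negStk C).length = C.length := List.length_map _

@[simp] theorem map_fst_negStk (C : BStack) : (negStk C).map Prod.fst = C.map Prod.fst := by
  simp [negStk]

@[simp] theorem negStk_negStk (C : BStack) : negStk (negStk C) = C := by
  simp [negStk, Function.comp_def]

theorem negStk_reverse (C : BStack) : negStk C.reverse = (negStk C).reverse := List.map_reverse ..

@[simp] theorem length_bflip (i : ℕ) (C : BStack) : (bflip i C).length = C.length := by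
  simp only [bflip_eq, List.length_append, length_negStk, List.length_reverse, List.length_take,
    List.length_drop]
  omega

theorem bflip_bflip (i : ℕ) (C : BStack) : bflip i (bflip i C) = C := by
  rcases le_total i C.length with h | h
  · simp [bflip_eq, h, negStk_reverse]
  · simp [bflip_eq, h, negStk_reverse, List.take_of_length_le, List.drop_of_length_le]

theorem bflip_append {i : ℕ} {C : BStack} (h : i ≤ C.length) (D : BStack) :
    bflip i (C ++ D) = bflip i C ++ D := by
  rw [bflip_eq, bflip_eq, List.take_append_of_le_length h, List.drop_append_of_le_length h,
    List.append_assoc]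

theorem bflip_length_self (C : BStack) : bflip C.length C = negStk C.reverse := by
  simp [bflip_eq]

end Flips

section Sorting

def FlipStep (C D : BStack) : Prop := ∃ i, 1 ≤ i ∧ i ≤ C.length ∧ bflip i C = D

theorem FlipStep.append {C D : BStack} (h : FlipStep C D) (E : BStack) :
    FlipStep (C ++ E) (D ++ E) := by
  obtain ⟨i, hi, hiC, rfl⟩ := h
  exact ⟨i, hi, by simp; omega, bflip_append hiC E⟩

theorem exists_flips_of_reflTransGen {C D : BStack} (h : ReflTransGen FlipStep C D) :
    ∃ s : List ℕ, (∀ i ∈ s, 1 ≤ i ∧ i ≤ C.length) ∧ s.foldl (fun E i => bflip i E) C = D := by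
  induction h using ReflTransGen.head_induction_on with
  | refl => exact ⟨[], by simp, rfl⟩
  | head hstep _ ih =>
    obtain ⟨i, hi, hiC, rfl⟩ := hstep
    obtain ⟨s, hs, hsD⟩ := ih
    refine ⟨i :: s, ?_, hsD⟩
    simp only [List.mem_cons, forall_eq_or_imp, length_bflip] at hs ⊢
    exact ⟨⟨hi, hiC⟩, hs⟩

theorem reflTransGen_cons_true (A B : BStack) (x : ℕ × Bool) :
    ReflTransGen FlipStep (A ++ x :: B) ((x.1, true) :: (negStk A.reverse ++ B)) := by
  have hflip : bflip (A.length + 1) (A ++ x :: B) = (x.1, !x.2) :: (negStk A.reverse ++ B) := by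
    rw [← List.singleton_append, ← List.append_assoc, bflip_append (by simp),
      show A.length + 1 = (A ++ [x]).length by simp, bflip_length_self]
    simp [negStk]
  have hstep : FlipStep (A ++ x :: B) ((x.1, !x.2) :: (negStk A.reverse ++ B)) :=
    ⟨A.length + 1, by omega, by simp, hflip⟩
  cases hx : x.2
  · simpa [hx] using ReflTransGen.single hstep
  · refine (ReflTransGen.single hstep).tail ⟨1, le_rfl, by simp, ?_⟩
    simp [hx, bflip_eq, negStk]

theorem Istk_succ (n : ℕ) : Istk (n + 1) = Istk n ++ [(n + 1, false)] := by
  simp [Istk, List.range_succ]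

theorem _root_.IsBStack.length_eq {n : ℕ} {C : BStack} (h : IsBStack n C) : C.length = n := by
  simpa using List.Perm.length_eq h

/-- Put the largest pancake on top burnt side up, flip the whole stack, and sort the rest. -/
theorem reflTransGen_Istk (n : ℕ) (C : BStack) (hC : IsBStack n C) :
    ReflTransGen FlipStep C (Istk n) := by
  induction n generalizing C with
  | zero =>
    obtain rfl : C = [] := by simpa [IsBStack] using hC
    exact ReflTransGen.refl
  | succ n ih =>
    obtain ⟨x, hxC, hx⟩ : ∃ x ∈ C, x.1 = n + 1 := by
      simpa using hC.symm.subset (by simp : n + 1 ∈ (List.range (n + 1)).map (· + 1))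
    obtain ⟨A, B, rfl⟩ := List.append_of_mem hxC
    set E := negStk A.reverse ++ B
    have hAB : (A.map Prod.fst ++ B.map Prod.fst).Perm ((List.range n).map (· + 1)) := by
      have h := hC
      simp only [IsBStack, List.map_append, List.map_cons, hx, List.range_succ,
        List.map_nil] at h
      exact (List.perm_middle.symm.trans (h.trans (List.perm_append_singleton _ _))).cons_inv
    have hE : IsBStack n (negStk E.reverse) := by
      have h := (List.reverse_perm _).trans ((List.reverse_perm (A.map Prod.fst)).append_right
        (B.map Prod.fst) |>.trans hAB)
      simpa [IsBStack, E, List.map_reverse] using h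
    have hlen : E.length = n := by simpa using hE.length_eq
    have hflip : FlipStep ((n + 1, true) :: E) (negStk E.reverse ++ [(n + 1, false)]) := by
      refine ⟨n + 1, by omega, by simp [hlen], ?_⟩
      have h := bflip_length_self ((n + 1, true) :: E)
      rw [List.length_cons, hlen] at h
      simp [h, negStk]
    have hsorted : ReflTransGen FlipStep (negStk E.reverse ++ [(n + 1, false)]) (Istk (n + 1)) := by
      rw [Istk_succ]
      exact (ih _ hE).lift (· ++ [(n + 1, false)]) fun _ _ h => h.append _
    have hcons := reflTransGen_cons_true A B x
    rw [hx] at hcons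
    exact (hcons.tail hflip).trans hsorted

theorem exists_flips_of_gB_le {n M : ℕ} {C : BStack} (hC : IsBStack n C) (hg : gB C ≤ M) :
    ∃ s : List ℕ, (∀ i ∈ s, 1 ≤ i ∧ i ≤ n) ∧ s.length ≤ M ∧
      s.foldl (fun E i => bflip i E) C = Istk n := by
  obtain ⟨s, hs, hsC⟩ := exists_flips_of_reflTransGen (reflTransGen_Istk n C hC)
  rw [← hC.length_eq] at hsC
  obtain ⟨s, hs, hlen, hsC⟩ := Nat.sInf_mem (s := {m | ∃ s : List ℕ,
    (∀ i ∈ s, 1 ≤ i ∧ i ≤ C.length) ∧ s.length = m ∧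
      s.foldl (fun D i => bflip i D) C = Istk C.length}) ⟨s.length, s, hs, rfl, hsC⟩
  rw [hC.length_eq] at hs hsC
  exact ⟨s, hs, hlen.trans_le hg, hsC⟩

end Sorting

section Adjacency

@[simp] theorem adjSeq_singleton (x : ℕ × Bool) : adjSeq [x] = [] := rfl

theorem adjSeq_cons_cons (x y : ℕ × Bool) (C : BStack) :
    adjSeq (x :: y :: C) = adjPair x y :: adjSeq (y :: C) := rfl

@[simp] theorem length_adjSeq (C : BStack) : (adjSeq C).length = C.length - 1 := by
  simp [adjSeq]

theorem getElem?_adjSeq (C : BStack) {j : ℕ} (hj : j + 1 < C.length) :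
    (adjSeq C)[j]? = some (adjPair C[j] C[j + 1]) := by
  rw [List.getElem?_eq_some_iff]
  exact ⟨by simp [adjSeq]; omega, by simp [adjSeq]⟩

theorem adjSeq_append_cons {A : BStack} (hA : A ≠ []) (y : ℕ × Bool) (B : BStack) :
    adjSeq (A ++ y :: B) = adjSeq A ++ adjPair (A.getLast hA) y :: adjSeq (y :: B) := by
  induction A with
  | nil => exact absurd rfl hA
  | cons a A ih =>
    rcases A with _ | ⟨a', A⟩
    · rfl
    · rw [List.cons_append, List.cons_append, adjSeq_cons_cons, ← List.cons_append, ih (by simp)]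
      simp [adjSeq_cons_cons]

theorem aB_append_cons {A : BStack} (hA : A ≠ []) (y : ℕ × Bool) (B : BStack) :
    aB (A ++ y :: B) = aB A + (adjPair (A.getLast hA) y).toNat + aB (y :: B) := by
  cases h : adjPair (A.getLast hA) y <;> simp [aB, adjSeq_append_cons hA, h]; omega

theorem adjPair_negStk (x y : ℕ × Bool) :
    adjPair (y.1, !y.2) (x.1, !x.2) = adjPair x y := by
  rcases x with ⟨a, _ | _⟩ <;> rcases y with ⟨c, _ | _⟩ <;> simp [adjPair]

theorem adjSeq_negStk_reverse (A : BStack) : adjSeq (negStk A.reverse) = (adjSeq A).reverse := by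
  induction A with
  | nil => rfl
  | cons x A ih =>
    rcases A with _ | ⟨y, A⟩
    · rfl
    · have h : negStk (x :: y :: A).reverse = negStk (y :: A).reverse ++ [(x.1, !x.2)] := by
        simp [negStk]
      rw [h, adjSeq_append_cons (by simp [negStk]), ih, adjSeq_cons_cons]
      simp [negStk, adjPair_negStk]

theorem aB_negStk_reverse (A : BStack) : aB (negStk A.reverse) = aB A := by
  simp [aB, adjSeq_negStk_reverse]

theorem aB_Istk (n : ℕ) : aB (Istk n) = n - 1 := by
  induction n with
  | zero => rfl
  | succ n ih =>
    rcases n with _ | n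
    · rfl
    · rw [Istk_succ, aB_append_cons (by simp [Istk]), ih]
      simp [Istk, List.getLast_map, adjPair, aB, adjSeq]

theorem aB_bflip_add {i : ℕ} {C : BStack} (hi : 1 ≤ i) (hiC : i < C.length) :
    ∃ b b' : Bool, (adjSeq (bflip i C))[i - 1]? = some b' ∧
      aB (bflip i C) + b.toNat = aB C + b'.toNat := by
  obtain ⟨y, B, hyB⟩ : ∃ y B, C.drop i = y :: B :=
    List.exists_cons_of_ne_nil (by simp; omega)
  set T := C.take i
  have hT : T ≠ [] := List.ne_nil_of_length_pos (by simp [T]; omega)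
  have hT' : negStk T.reverse ≠ [] := by simpa [negStk] using hT
  have hC : C = T ++ y :: B := by rw [← hyB, List.take_append_drop]
  have hflip : bflip i C = negStk T.reverse ++ y :: B := by rw [bflip_eq, hyB]
  refine ⟨adjPair (T.getLast hT) y, adjPair ((negStk T.reverse).getLast hT') y, ?_, ?_⟩
  · have hlen : (adjSeq (negStk T.reverse)).length = i - 1 := by simp [T]; omega
    rw [hflip, adjSeq_append_cons hT', ← hlen, List.getElem?_append_right le_rfl]
    simp
  · rw [hflip, aB_append_cons hT', aB_negStk_reverse, hC, aB_append_cons hT]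
    omega

theorem aB_bflip_le {i : ℕ} {C : BStack} (hi : 1 ≤ i) (hiC : i ≤ C.length) :
    aB (bflip i C) ≤ aB C + 1 := by
  rcases hiC.lt_or_eq with hlt | rfl
  · obtain ⟨b, b', -, h⟩ := aB_bflip_add hi hlt
    cases b <;> cases b' <;> simp at h <;> omega
  · rw [bflip_length_self, aB_negStk_reverse]
    omega

theorem getElem?_adjSeq_bflip_of_aB_eq {i : ℕ} {C : BStack} (hi : 1 ≤ i) (hiC : i ≤ C.length)
    (h : aB (bflip i C) = aB C + 1) : (adjSeq (bflip i C))[i - 1]? = some true := by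
  rcases hiC.lt_or_eq with hlt | rfl
  · obtain ⟨b, b', hb', hcount⟩ := aB_bflip_add hi hlt
    cases b'
    · cases b <;> simp at hcount <;> omega
    · exact hb'
  · rw [bflip_length_self, aB_negStk_reverse] at h
    omega

end Adjacency

section Codes

/-- Undoes one flip of a sorting sequence, given the stack `E` it produced: `.inl r` undoes the
flip that created the `r`-th adjacency of `E`, and `.inr i` undoes an `i`-flip. -/
def unflip (E : BStack) : ℕ ⊕ ℕ → BStack
  | .inl r => bflip (((adjSeq E).idxsOf true).getD r 0 + 1) E
  | .inr i => bflip i E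

def decode (n : ℕ) (e : List (ℕ ⊕ ℕ)) : BStack := e.foldr (fun c E => unflip E c) (Istk n)

@[simp] theorem decode_cons (n : ℕ) (c : ℕ ⊕ ℕ) (e : List (ℕ ⊕ ℕ)) :
    decode n (c :: e) = unflip (decode n e) c := rfl

theorem exists_unflip_inl_eq {i : ℕ} {D : BStack} (hi : 1 ≤ i) (hiD : i ≤ D.length)
    (h : aB (bflip i D) = aB D + 1) : ∃ r < aB (bflip i D), unflip (bflip i D) (.inl r) = D := by
  set L := (adjSeq (bflip i D)).idxsOf true
  have hmem : i - 1 ∈ L := by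
    simpa [L, List.idxsOf] using
      List.getElem?_eq_some_iff.mp (getElem?_adjSeq_bflip_of_aB_eq hi hiD h)
  have hlt : L.idxOf (i - 1) < L.length := List.idxOf_lt_length_iff.mpr hmem
  refine ⟨L.idxOf (i - 1), ?_, ?_⟩
  · simpa [L, List.idxsOf, aB, List.count] using hlt
  · rw [unflip, List.getD_eq_getElem _ _ hlt, List.getElem_idxOf, Nat.sub_add_cancel hi,
      bflip_bflip]

theorem exists_code {n : ℕ} (s : List ℕ) (D : BStack) (hs : ∀ i ∈ s, 1 ≤ i ∧ i ≤ D.length)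
    (hsD : s.foldl (fun E i => bflip i E) D = Istk n) :
    ∃ e : List (ℕ ⊕ ℕ), decode n e = D ∧ e.length = s.length ∧
      n - 1 ≤ aB D + e.countP Sum.isLeft ∧
      ∀ t c, e[t]? = some c → Sum.elim (· ≤ aB D + t) (· ≤ D.length) c := by
  induction s generalizing D with
  | nil =>
    obtain rfl : D = Istk n := hsD
    exact ⟨[], rfl, rfl, by simp [aB_Istk], by simp⟩
  | cons i s ih =>
    simp only [List.mem_cons, forall_eq_or_imp, List.foldl_cons] at hs hsD
    obtain ⟨⟨hi, hiD⟩, hs⟩ := hs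
    obtain ⟨e, hdec, hlen, hleft, hbound⟩ := ih (bflip i D) (by simpa using hs) hsD
    have hle := aB_bflip_le hi hiD
    have htail : ∀ (c : ℕ ⊕ ℕ) t, e[t]? = some c →
        Sum.elim (· ≤ aB D + (t + 1)) (· ≤ D.length) c := by
      intro c t hc
      have := hbound t c hc
      rcases c with r | j <;> simp at this ⊢ <;> omega
    by_cases hc : aB (bflip i D) = aB D + 1
    · obtain ⟨r, hr, hrD⟩ := exists_unflip_inl_eq hi hiD hc
      refine ⟨.inl r :: e, by simp [hdec, hrD], by simp [hlen], ?_, ?_⟩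
      · rw [List.countP_cons]
        simp
        omega
      · rintro (_ | t) c hct
        · obtain rfl : Sum.inl r = c := by simpa using hct
          simp
          omega
        · exact htail c t (by simpa using hct)
    · refine ⟨.inr i :: e, by simp [hdec, unflip, bflip_bflip], by simp [hlen], ?_, ?_⟩
      · rw [List.countP_cons]
        simp
        omega
      · rintro (_ | t) c hct
        · obtain rfl : Sum.inr i = c := by simpa using hct
          simpa using hiD
        · exact htail c t (by simpa using hct)

end Codes

section Counting

theorem card_subtype_and_add_card_subtype_and_not {α : Type*} [Fintype α] (P Q : α → Prop) :
    Nat.card {a // P a ∧ Q a} + Nat.card {a // P a ∧ ¬ Q a} = Nat.card {a // P a} := by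
  classical
  simp only [Nat.card_eq_fintype_card, Fintype.card_subtype]
  rw [← Finset.filter_filter, ← Finset.filter_filter, Finset.card_filter_add_card_filter_not]

theorem exists_fin_getD_eq_iff_mem {α : Type*} {L : List α} {k : ℕ} (hL : L.length ≤ k)
    {d x : α} (hx : x ≠ d) : (∃ j : Fin k, L.getD j d = x) ↔ x ∈ L := by
  constructor
  · rintro ⟨j, rfl⟩
    rcases lt_or_ge (j : ℕ) L.length with hj | hj
    · rw [List.getD_eq_getElem _ _ hj]
      exact List.getElem_mem hj
    · exact absurd (List.getD_eq_default _ _ hj) hx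
  · intro hxL
    obtain ⟨j, hj, rfl⟩ := List.mem_iff_getElem.mp hxL
    exact ⟨⟨j, hj.trans_le hL⟩, List.getD_eq_getElem _ _ hj⟩

theorem countP_isLeft_add_countP_isRight {α β : Type*} (e : List (α ⊕ β)) :
    e.countP Sum.isLeft + e.countP Sum.isRight = e.length := by
  induction e with
  | nil => rfl
  | cons c e ih => cases c <;> simp [List.countP_cons] <;> omega

def IsFlipCode (n m k : ℕ) (e : List (ℕ ⊕ ℕ)) : Prop :=
  e.length ≤ m ∧ e.countP Sum.isRight ≤ k ∧
    ∀ (t : ℕ) (c : ℕ ⊕ ℕ), e[t]? = some c → Sum.elim (· ≤ t) (· ≤ n) c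

def rightEntries (e : List (ℕ ⊕ ℕ)) : List ((ℕ ⊕ ℕ) × ℕ) := e.zipIdx.filter (·.1.isRight)

theorem mem_rightEntries {e : List (ℕ ⊕ ℕ)} {c : ℕ ⊕ ℕ} {t : ℕ} :
    (c, t) ∈ rightEntries e ↔ e[t]? = some c ∧ c.isRight := by
  simp [rightEntries, List.mem_zipIdx_iff_getElem?]

theorem length_rightEntries (e : List (ℕ ⊕ ℕ)) :
    (rightEntries e).length = e.countP Sum.isRight := by
  rw [rightEntries, ← List.countP_eq_length_filter]
  conv_rhs => rw [← List.zipIdx_map_fst 0 e, List.countP_map]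
  rfl

/-- A code is determined by its length, its right entries (padded to `k` of them with a
position `m` that no entry has) and the values of its left entries. -/
def codeSummary (m k : ℕ) (e : List (ℕ ⊕ ℕ)) : ℕ × (Fin k → (ℕ ⊕ ℕ) × ℕ) × (Fin m → ℕ) :=
  (e.length, fun j => (rightEntries e).getD j (.inr 0, m),
    fun t => (e.getD t (.inr 0)).elim id fun _ => 0)

def codeBox (n m k : ℕ) : Finset (ℕ × (Fin k → (ℕ ⊕ ℕ) × ℕ) × (Fin m → ℕ)) :=
  Finset.range (m + 1) ×ˢ
    Fintype.piFinset (fun _ => (Finset.range (n + 1)).map .inr ×ˢ Finset.range (m + 1)) ×ˢ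
    Fintype.piFinset (fun t : Fin m => Finset.range (t + 1))

theorem card_codeBox (n m k : ℕ) :
    (codeBox n m k).card = (m + 1) * ((n + 1) * (m + 1)) ^ k * m ! := by
  simp [codeBox, Fintype.card_piFinset, Fin.prod_univ_eq_prod_range (· + 1),
    Finset.prod_range_add_one_eq_factorial]
  ring

theorem codeSummary_mem_codeBox {n m k : ℕ} {e : List (ℕ ⊕ ℕ)} (he : IsFlipCode n m k e) :
    codeSummary m k e ∈ codeBox n m k := by
  obtain ⟨hlen, -, hval⟩ := he
  simp only [codeSummary, codeBox, Finset.mem_product, Finset.mem_range, Fintype.mem_piFinset]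
  refine ⟨by omega, fun j => ?_, fun t => ?_⟩
  · rw [List.getD_eq_getElem?_getD]
    rcases h : (rightEntries e)[(j : ℕ)]? with _ | ⟨c, t⟩
    · simp
    · obtain ⟨hct, hc⟩ := mem_rightEntries.mp (List.mem_of_getElem? h)
      have ht := (List.getElem?_eq_some_iff.mp hct).1
      rcases c with r | i
      · simp at hc
      · simpa [Finset.mem_map] using ⟨hval t _ hct, by omega⟩
  · rw [List.getD_eq_getElem?_getD]
    rcases h : e[(t : ℕ)]? with _ | (r | i)
    · simp
    · simpa [Nat.lt_succ_iff] using hval t _ h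
    · simp

theorem getElem?_eq_of_rightEntries_getD_eq {n m k : ℕ} {e e' : List (ℕ ⊕ ℕ)}
    (he : IsFlipCode n m k e) (he' : IsFlipCode n m k e')
    (h : ∀ j : Fin k, (rightEntries e).getD j (.inr 0, m) = (rightEntries e').getD j (.inr 0, m))
    {c : ℕ ⊕ ℕ} {t : ℕ} (hc : e[t]? = some c) (hcR : c.isRight) : e'[t]? = some c := by
  have ht : t < m := ((List.getElem?_eq_some_iff.mp hc).1).trans_le he.1
  have hne : (c, t) ≠ (.inr 0, m) := by simp; omega
  have hmem := mem_rightEntries.mpr ⟨hc, hcR⟩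
  rw [← exists_fin_getD_eq_iff_mem ((length_rightEntries e).trans_le he.2.1) hne] at hmem
  simp only [h] at hmem
  rw [exists_fin_getD_eq_iff_mem ((length_rightEntries e').trans_le he'.2.1) hne] at hmem
  exact (mem_rightEntries.mp hmem).1

theorem codeSummary_injOn (n m k : ℕ) :
    Set.InjOn (codeSummary m k) {e | IsFlipCode n m k e} := by
  intro e he e' he' h
  simp only [codeSummary, Prod.mk.injEq, funext_iff] at h
  obtain ⟨hlen, hright, hleft⟩ := h
  apply List.ext_getElem?
  intro t
  cases hc : e[t]? with
  | none =>
    rw [eq_comm, List.getElem?_eq_none_iff, ← hlen]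
    exact List.getElem?_eq_none_iff.mp hc
  | some c =>
    have ht := (List.getElem?_eq_some_iff.mp hc).1
    obtain ⟨c', hc'⟩ : ∃ c', e'[t]? = some c' :=
      ⟨_, List.getElem?_eq_getElem (hlen ▸ ht)⟩
    rcases c with r | i
    · rcases c' with r' | i'
      · have := hleft ⟨t, ht.trans_le he.1⟩
        simp only [List.getD_eq_getElem?_getD, hc, hc'] at this
        rw [hc']
        simpa using this
      · have := getElem?_eq_of_rightEntries_getD_eq he' he (fun j => (hright j).symm) hc' rfl
        simp [hc] at this
    · exact (getElem?_eq_of_rightEntries_getD_eq he he' hright hc rfl).symm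

theorem card_le_of_injective_isFlipCode {α : Type*} {n m k : ℕ} (f : α → List (ℕ ⊕ ℕ))
    (hf : Function.Injective f) (hcode : ∀ a, IsFlipCode n m k (f a)) :
    Nat.card α ≤ (m + 1) * ((n + 1) * (m + 1)) ^ k * m ! := by
  rw [← card_codeBox, ← Nat.card_eq_finsetCard]
  refine Nat.card_le_card_of_injective
    (fun a => ⟨codeSummary m k (f a), codeSummary_mem_codeBox (hcode a)⟩) fun a b hab => ?_
  exact hf (codeSummary_injOn n m k (hcode a) (hcode b) (congrArg Subtype.val hab))

end Counting

section Stacks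

variable {n : ℕ}

@[simp] theorem length_toBStack (π : Perm (Fin n)) (w : Fin n → Bool) :
    (toBStack π w).length = n := by
  simp [toBStack]

theorem getElem_toBStack (π : Perm (Fin n)) (w : Fin n → Bool) {j : ℕ}
    (hj : j < (toBStack π w).length) :
    (toBStack π w)[j] = ((π ⟨j, by simpa using hj⟩ : ℕ) + 1, w ⟨j, by simpa using hj⟩) := by
  simp [toBStack]

theorem isBStack_toBStack (π : Perm (Fin n)) (w : Fin n → Bool) : IsBStack n (toBStack π w) := by
  have h : (List.range n).map (· + 1) = (List.finRange n).map fun a : Fin n => (a : ℕ) + 1 := by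
    apply List.ext_getElem <;> simp
  rw [IsBStack, h]
  simpa [toBStack, Function.comp_def] using (π.map_finRange_perm).map fun a : Fin n => (a : ℕ) + 1

theorem toBStack_injective :
    Function.Injective fun pw : Perm (Fin n) × (Fin n → Bool) => toBStack pw.1 pw.2 := by
  rintro ⟨π, w⟩ ⟨π', w'⟩ h
  simp only [toBStack, List.map_inj_left, List.mem_finRange, Prod.mk.injEq, add_left_inj,
    forall_const] at h
  simp only [Prod.mk.injEq]
  exact ⟨Equiv.ext fun j => Fin.ext (h j).1, funext fun j => (h j).2⟩

theorem card_noAdj_gB_le (n k : ℕ) (hn : 1 ≤ n) :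
    Nat.card {pw : Perm (Fin n) × (Fin n → Bool) //
        aB (toBStack pw.1 pw.2) = 0 ∧ gB (toBStack pw.1 pw.2) ≤ n - 1 + k} ≤
      (n + k) * ((n + 1) * (n + k)) ^ k * (n - 1 + k)! := by
  have hcode : ∀ pw : {pw : Perm (Fin n) × (Fin n → Bool) //
      aB (toBStack pw.1 pw.2) = 0 ∧ gB (toBStack pw.1 pw.2) ≤ n - 1 + k},
      ∃ e, IsFlipCode n (n - 1 + k) k e ∧ decode n e = toBStack pw.1.1 pw.1.2 := by
    rintro ⟨⟨π, w⟩, h0, hg⟩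
    dsimp only at h0 hg ⊢
    obtain ⟨s, hs, hlen, hsort⟩ := exists_flips_of_gB_le (isBStack_toBStack π w) hg
    obtain ⟨e, hdec, helen, hleft, hbound⟩ :=
      exists_code s (toBStack π w) (by simpa using hs) hsort
    have := countP_isLeft_add_countP_isRight e
    refine ⟨e, ⟨by omega, by omega, fun t c hc => ?_⟩, hdec⟩
    simpa [h0] using hbound t c hc
  choose code hcode hdec using hcode
  have hinj : Function.Injective code := fun x y hxy =>
    Subtype.ext (toBStack_injective ((hdec x).symm.trans (hxy ▸ hdec y)))
  have hm : n - 1 + k + 1 = n + k := by omega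
  simpa [hm] using card_le_of_injective_isFlipCode code hinj hcode

end Stacks

section Adjacent

variable {n : ℕ}

theorem card_mul_le_of_determined {j j' : Fin n} (hjj' : j ≠ j')
    (P : Perm (Fin n) × (Fin n → Bool) → Prop) (hw : ∀ p, P p → p.2 j' = p.2 j)
    (hπ : ∀ p q, P p → P q → p.1 j = q.1 j → p.2 j = q.2 j → p.1 j' = q.1 j') :
    Nat.card {p // P p} * ((n - 1) * 2) ≤ n ! * 2 ^ n := by
  let F : {p // P p} × {t : Fin n // t ≠ j} × Bool → Perm (Fin n) × (Fin n → Bool) :=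
    fun x => (x.1.1.1 * swap j' x.2.1, Function.update x.1.1.2 j' x.2.2)
  have hF : Function.Injective F := by
    rintro ⟨⟨⟨π, w⟩, hp⟩, ⟨t, ht⟩, b⟩ ⟨⟨⟨π', w'⟩, hp'⟩, ⟨t', ht'⟩, b'⟩ h
    simp only [F, Prod.mk.injEq] at h
    obtain ⟨hσ, hv⟩ := h
    have hπj : π j = π' j := by
      simpa [swap_apply_of_ne_of_ne hjj' (Ne.symm ht), swap_apply_of_ne_of_ne hjj' (Ne.symm ht')]
        using congrArg (· j) hσ
    have hwj : w j = w' j := by simpa [Function.update_of_ne hjj'] using congrFun hv j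
    have hπj' : π j' = π' j' := hπ _ _ hp hp' hπj hwj
    obtain rfl : t = t' := by
      apply (π * swap j' t).injective
      calc (π * swap j' t) t = π j' := by simp
        _ = (π' * swap j' t') t' := by simp [hπj']
        _ = (π * swap j' t) t' := by rw [hσ]
    obtain rfl : π = π' := mul_right_cancel hσ
    obtain rfl : w = w' := by
      funext z
      by_cases hz : z = j'
      · rw [hz]
        exact (hw _ hp).trans (hwj.trans (hw _ hp').symm)
      · simpa [Function.update_of_ne hz] using congrFun hv z
    obtain rfl : b = b' := by simpa using congrFun hv j'
    rfl
  have := Nat.card_le_card_of_injective F hF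
  simpa [Nat.card_prod, Fintype.card_perm, mul_comm, mul_left_comm, mul_assoc] using this

theorem adjPair_eq_true_iff {a c : ℕ} {u v : Bool} :
    adjPair (a, u) (c, v) = true ↔ u = v ∧ (u = false ∧ c = a + 1 ∨ u = true ∧ a = c + 1) := by
  cases u <;> cases v <;> simp [adjPair]

theorem getElem?_adjSeq_toBStack (π : Perm (Fin n)) (w : Fin n → Bool) {j : ℕ} (hj : j + 1 < n) :
    (adjSeq (toBStack π w))[j]? = some (adjPair ((π ⟨j, by omega⟩ : ℕ) + 1, w ⟨j, by omega⟩)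
      ((π ⟨j + 1, hj⟩ : ℕ) + 1, w ⟨j + 1, hj⟩)) := by
  rw [getElem?_adjSeq _ (by simpa using hj), getElem_toBStack, getElem_toBStack]

theorem card_adjacent_mul_le {j : ℕ} (hj : j + 1 < n) :
    Nat.card {pw : Perm (Fin n) × (Fin n → Bool) // (adjSeq (toBStack pw.1 pw.2))[j]? = some true} *
      ((n - 1) * 2) ≤ n ! * 2 ^ n := by
  refine card_mul_le_of_determined (j := ⟨j, by omega⟩) (j' := ⟨j + 1, hj⟩) (by simp) _ ?_ ?_
  · rintro ⟨π, w⟩ h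
    rw [getElem?_adjSeq_toBStack _ _ hj, Option.some_inj, adjPair_eq_true_iff] at h
    exact h.1.symm
  · rintro ⟨π, w⟩ ⟨π', w'⟩ h h' hπ hw
    rw [getElem?_adjSeq_toBStack _ _ hj, Option.some_inj, adjPair_eq_true_iff] at h h'
    dsimp only at *
    apply Fin.ext
    have := congrArg Fin.val hπ
    rcases h with ⟨-, ⟨hu, hc⟩ | ⟨hu, hc⟩⟩ <;> rcases h' with ⟨-, ⟨hu', hc'⟩ | ⟨hu', hc'⟩⟩ <;>
      simp_all

theorem exists_adjacent_of_aB_ne_zero {C : BStack} (h : aB C ≠ 0) :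
    ∃ j, j + 1 < C.length ∧ (adjSeq C)[j]? = some true := by
  obtain ⟨j, hj⟩ := List.mem_iff_getElem?.mp (List.count_pos_iff.mp (Nat.pos_of_ne_zero h))
  have := (List.getElem?_eq_some_iff.mp hj).1
  simp only [length_adjSeq] at this
  exact ⟨j, by omega, hj⟩

theorem le_two_mul_card_noAdj (hn : 2 ≤ n) :
    n ! * 2 ^ n ≤
      2 * Nat.card {pw : Perm (Fin n) × (Fin n → Bool) // aB (toBStack pw.1 pw.2) = 0} := by
  let good := Finset.univ.filter fun pw : Perm (Fin n) × (Fin n → Bool) =>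
    aB (toBStack pw.1 pw.2) = 0
  let bad := Finset.univ.filter fun pw : Perm (Fin n) × (Fin n → Bool) =>
    ¬ aB (toBStack pw.1 pw.2) = 0
  let adj (j : ℕ) := Finset.univ.filter fun pw : Perm (Fin n) × (Fin n → Bool) =>
    (adjSeq (toBStack pw.1 pw.2))[j]? = some true
  have hsplit : good.card + bad.card = n ! * 2 ^ n := by
    rw [Finset.card_filter_add_card_filter_not]
    simp [Fintype.card_perm]
  have hcover : bad ⊆ (Finset.range (n - 1)).biUnion adj := by
    intro pw hpw
    obtain ⟨j, hj, hadj⟩ := exists_adjacent_of_aB_ne_zero (Finset.mem_filter.mp hpw).2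
    simp only [length_toBStack] at hj
    simpa [adj] using ⟨j, by omega, hadj⟩
  have hadj : ∀ j ∈ Finset.range (n - 1), (adj j).card * ((n - 1) * 2) ≤ n ! * 2 ^ n := by
    intro j hj
    simpa [adj, Nat.card_eq_fintype_card, Fintype.card_subtype] using
      card_adjacent_mul_le (n := n) (j := j) (by simp at hj; omega)
  have hbad : bad.card * ((n - 1) * 2) ≤ (n - 1) * (n ! * 2 ^ n) := calc
    bad.card * ((n - 1) * 2) ≤ (∑ j ∈ Finset.range (n - 1), (adj j).card) * ((n - 1) * 2) :=
      Nat.mul_le_mul_right _ ((Finset.card_le_card hcover).trans Finset.card_biUnion_le)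
    _ = ∑ j ∈ Finset.range (n - 1), (adj j).card * ((n - 1) * 2) := Finset.sum_mul ..
    _ ≤ ∑ _j ∈ Finset.range (n - 1), n ! * 2 ^ n := Finset.sum_le_sum hadj
    _ = (n - 1) * (n ! * 2 ^ n) := by simp
  have h2 : 2 * bad.card ≤ n ! * 2 ^ n :=
    Nat.le_of_mul_le_mul_left (by linarith) (by omega : 0 < n - 1)
  rw [Nat.card_eq_fintype_card, Fintype.card_subtype]
  change _ ≤ 2 * good.card
  omega

end Adjacent

section Estimates

theorem four_mul_pow_mul_factorial_lt {n k : ℕ} (hn : 16 ≤ n) (hpow : n ^ (4 * k) ≤ 2 ^ n) :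
    4 * ((n + k) * ((n + 1) * (n + k)) ^ k * (n - 1 + k)!) < n ! * 2 ^ n := by
  have hk : 16 * k ≤ n := by
    have : 2 ^ (16 * k) ≤ 2 ^ n := calc
      2 ^ (16 * k) = 16 ^ (4 * k) := by rw [pow_mul, pow_mul]; norm_num
      _ ≤ n ^ (4 * k) := Nat.pow_le_pow_left hn _
      _ ≤ 2 ^ n := hpow
    exact (Nat.pow_le_pow_iff_right (by norm_num)).mp this
  have hfact : (n + k) * (n - 1 + k)! ≤ n ! * (n + k) ^ k := by
    have h := Nat.factorial_mul_descFactorial (show k ≤ n + k by omega)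
    rw [Nat.add_sub_cancel] at h
    have hsucc : (n + k) * (n - 1 + k)! = (n + k)! := by
      rw [show n + k = n - 1 + k + 1 by omega, Nat.factorial_succ]
    rw [hsucc, ← h]
    exact Nat.mul_le_mul_left _ (Nat.descFactorial_le_pow _ _)
  have hcube : (n + 1) * (n + k) * (n + k) ≤ 2 * n ^ 3 := by
    have h1 : 16 * (n + 1) ≤ 17 * n := by omega
    have h2 : 16 * (n + k) ≤ 17 * n := by omega
    have := Nat.mul_le_mul h1 (Nat.mul_le_mul h2 h2)
    nlinarith
  have hexp : 4 * (2 * n ^ 3) ^ k < 2 ^ n := by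
    have : (4 * (2 * n ^ 3) ^ k) ^ 4 < (2 ^ n) ^ 4 := calc
      (4 * (2 * n ^ 3) ^ k) ^ 4 = 2 ^ (8 + 4 * k) * (n ^ (4 * k)) ^ 3 := by ring
      _ ≤ 2 ^ (8 + 4 * k) * (2 ^ n) ^ 3 := by gcongr
      _ = 2 ^ (8 + 4 * k + 3 * n) := by ring
      _ < 2 ^ (4 * n) := Nat.pow_lt_pow_right (by norm_num) (by omega)
      _ = (2 ^ n) ^ 4 := by ring
    exact lt_of_pow_lt_pow_left₀ 4 (by positivity) this
  calc 4 * ((n + k) * ((n + 1) * (n + k)) ^ k * (n - 1 + k)!)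
      = 4 * ((n + k) * (n - 1 + k)!) * ((n + 1) * (n + k)) ^ k := by ring
    _ ≤ 4 * (n ! * (n + k) ^ k) * ((n + 1) * (n + k)) ^ k := by gcongr
    _ = n ! * (4 * ((n + 1) * (n + k) * (n + k)) ^ k) := by
        rw [mul_pow ((n + 1) * (n + k)) (n + k) k]
        ring
    _ ≤ n ! * (4 * (2 * n ^ 3) ^ k) := by gcongr
    _ < n ! * 2 ^ n := Nat.mul_lt_mul_of_pos_left hexp (Nat.factorial_pos n)

theorem pow_four_mul_floor_le_two_pow {n : ℕ} (hn : 2 ≤ n) :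
    n ^ (4 * ⌊(n : ℝ) / (4 * Real.logb 2 n)⌋₊) ≤ 2 ^ n := by
  set k := ⌊(n : ℝ) / (4 * Real.logb 2 n)⌋₊
  have hL : 0 < Real.logb 2 n := Real.logb_pos (by norm_num) (by exact_mod_cast (by omega : 1 < n))
  have hk : (k : ℝ) * (4 * Real.logb 2 n) ≤ n :=
    (le_div_iff₀ (by positivity)).mp (Nat.floor_le (by positivity))
  have : ((n ^ (4 * k) : ℕ) : ℝ) ≤ ((2 ^ n : ℕ) : ℝ) := by
    push_cast
    calc (n : ℝ) ^ (4 * k) = (2 : ℝ) ^ (Real.logb 2 n * (4 * k : ℕ)) := by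
          rw [Real.rpow_mul (by norm_num),
            Real.rpow_logb (by norm_num) (by norm_num) (by positivity), Real.rpow_natCast]
      _ ≤ 2 ^ (n : ℝ) := Real.rpow_le_rpow_of_exponent_le (by norm_num) (by push_cast; linarith)
      _ = 2 ^ n := Real.rpow_natCast 2 n
  exact_mod_cast this

theorem le_sub_one_add_floor_of_le {g n : ℕ} {x : ℝ} (hn : 1 ≤ n) (h : (g : ℝ) ≤ n - 1 + x) :
    g ≤ n - 1 + ⌊x⌋₊ := by
  have hx := Nat.lt_floor_add_one x
  have : (g : ℝ) < ((n + ⌊x⌋₊ : ℕ) : ℝ) := by push_cast; linarith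
  have := Nat.cast_lt.mp this
  omega

end Estimates

theorem four_mul_card_noAdj_fast_lt {n : ℕ} (hn : 16 ≤ n) :
    4 * Nat.card {pw : Perm (Fin n) × (Fin n → Bool) //
        aB (toBStack pw.1 pw.2) = 0 ∧
        (gB (toBStack pw.1 pw.2) : ℝ) ≤ (n : ℝ) - 1 + n / (4 * Real.logb 2 n)} <
      n ! * 2 ^ n := by
  set k := ⌊(n : ℝ) / (4 * Real.logb 2 n)⌋₊
  calc 4 * Nat.card {pw : Perm (Fin n) × (Fin n → Bool) //
        aB (toBStack pw.1 pw.2) = 0 ∧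
        (gB (toBStack pw.1 pw.2) : ℝ) ≤ (n : ℝ) - 1 + n / (4 * Real.logb 2 n)}
      ≤ 4 * Nat.card {pw : Perm (Fin n) × (Fin n → Bool) //
        aB (toBStack pw.1 pw.2) = 0 ∧ gB (toBStack pw.1 pw.2) ≤ n - 1 + k} :=
        Nat.mul_le_mul_left 4 (Nat.card_le_card_of_injective _ (Subtype.impEmbedding _ _
          fun _ h => ⟨h.1, le_sub_one_add_floor_of_le (by omega) h.2⟩).injective)
    _ ≤ 4 * ((n + k) * ((n + 1) * (n + k)) ^ k * (n - 1 + k)!) :=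
        Nat.mul_le_mul_left 4 (card_noAdj_gB_le n k (by omega))
    _ < n ! * 2 ^ n := four_mul_pow_mul_factorial_lt hn (pow_four_mul_floor_le_two_pow (by omega))

end BurntPancake

/-- For every integer `n ≥ 16`, the number of stacks of `n` burnt
pancakes that have no adjacency and can be sorted in at most `n − 1 + n/(4·log₂ n)`
flips is less than `(1/4)·n!·2^n`; consequently, at least half of the `n!·2^n/2` or
more stacks with no adjacency require more than `n − 1 + n/(4·log₂ n)` flips. -/
theorem few_noadjacency_stacks_sort_fast (n : ℕ) (hn : 16 ≤ n) :
    4 * Nat.card {pw : Equiv.Perm (Fin n) × (Fin n → Bool) //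
        aB (toBStack pw.1 pw.2) = 0 ∧
        (gB (toBStack pw.1 pw.2) : ℝ) ≤ (n : ℝ) - 1 + n / (4 * Real.logb 2 n)} <
      n.factorial * 2 ^ n ∧
    n.factorial * 2 ^ n ≤
      2 * Nat.card {pw : Equiv.Perm (Fin n) × (Fin n → Bool) //
        aB (toBStack pw.1 pw.2) = 0} ∧
    Nat.card {pw : Equiv.Perm (Fin n) × (Fin n → Bool) //
        aB (toBStack pw.1 pw.2) = 0} ≤
      2 * Nat.card {pw : Equiv.Perm (Fin n) × (Fin n → Bool) //
        aB (toBStack pw.1 pw.2) = 0 ∧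
        (n : ℝ) - 1 + n / (4 * Real.logb 2 n) < (gB (toBStack pw.1 pw.2) : ℝ)} := by
  have hfast := BurntPancake.four_mul_card_noAdj_fast_lt hn
  have hnoAdj := BurntPancake.le_two_mul_card_noAdj (by omega : 2 ≤ n)
  have hsplit := BurntPancake.card_subtype_and_add_card_subtype_and_not
    (fun pw : Perm (Fin n) × (Fin n → Bool) => aB (toBStack pw.1 pw.2) = 0)
    (fun pw => (gB (toBStack pw.1 pw.2) : ℝ) ≤ (n : ℝ) - 1 + n / (4 * Real.logb 2 n))
  simp only [not_le] at hsplit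
  exact ⟨hfast, hnoAdj, by omega⟩
end

section
/- For every positive integer n, the average over all n! permutations π of {1,…,n} of the minimum number of prefix reversals f(π) needed to sort π is at least n − 2. -/
/-- A stack of unburnt pancakes: the list of pancake sizes from top to bottom. -/
abbrev UStack := List ℕ

/-- An `i`-flip (prefix reversal): reverse the order of the top `i` pancakes. -/
def uflip (i : ℕ) (C : UStack) : UStack := (C.take i).reverse ++ C.drop i

/-- The sorted stack `(1, 2, …, n)` from top to bottom. -/
def uId (n : ℕ) : UStack := (List.range n).map (· + 1)

/-- `C` is a stack of `n` unburnt pancakes: it is a permutation of `{1,…,n}`. -/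
def IsUStack (n : ℕ) (C : UStack) : Prop := C.Perm ((List.range n).map (· + 1))

/-- `f C`: the minimum number of flips transforming `C` into the identity stack. -/
noncomputable def fU (C : UStack) : ℕ :=
  sInf { m | ∃ s : List ℕ, (∀ i ∈ s, 1 ≤ i ∧ i ≤ C.length) ∧ s.length = m ∧
      s.foldl (fun D i => uflip i D) C = uId C.length }

/-- The stack of `n` unburnt pancakes determined by a permutation `π` of `Fin n`:
the pancake at the `j`-th position from the top has size `π j + 1`. -/
def toUStack {n : ℕ} (π : Equiv.Perm (Fin n)) : UStack :=
  (List.finRange n).map fun j => (π j : ℕ) + 1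

/-- `a C`: the number of pairs of consecutive positions of `C` whose values differ by
exactly `1` (adjacencies), plus `1` if the pancake `n` lies at the bottom of the
stack (which counts as an additional adjacency). -/
def aU (C : UStack) : ℕ :=
  ((C.zip C.tail).filter fun pq => pq.1 + 1 == pq.2 || pq.2 + 1 == pq.1).length +
    (if C.getLast? = some C.length then 1 else 0)

/-! A flip of the top `i` pancakes reverses the prefix, which keeps its internal adjacencies,
and changes only the boundary between the prefix and the rest; so each flip raises `aU` by at
most one. The sorted stack of `n` pancakes has `aU = n`, hence `n ≤ fU C + aU C`. Averaged over
all permutations, two fixed positions hold consecutive values for a proportion `2/n` of them and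
the bottom pancake is `n` for a proportion `1/n`, so the average of `aU` is `(2n - 1)/n ≤ 2`. -/

open Finset

def isAdj (pq : ℕ × ℕ) : Bool := pq.1 + 1 == pq.2 || pq.2 + 1 == pq.1

def numAdj (C : List ℕ) : ℕ := ((C.zip C.tail).filter isAdj).length

lemma aU_eq_numAdj_add (C : List ℕ) :
    aU C = numAdj C + if C.getLast? = some C.length then 1 else 0 := rfl

lemma isAdj_swap (a b : ℕ) : isAdj (b, a) = isAdj (a, b) := by
  simp [isAdj, Bool.or_comm]

@[simp] lemma numAdj_nil : numAdj [] = 0 := rfl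

@[simp] lemma numAdj_singleton (a : ℕ) : numAdj [a] = 0 := rfl

lemma numAdj_cons_cons (a b : ℕ) (l : List ℕ) :
    numAdj (a :: b :: l) = numAdj (b :: l) + if isAdj (a, b) then 1 else 0 := by
  simp only [numAdj, List.tail_cons, List.zip_cons_cons, List.filter_cons]
  split <;> simp

lemma numAdj_concat (l : List ℕ) (a b : ℕ) :
    numAdj (l ++ [a] ++ [b]) = numAdj (l ++ [a]) + if isAdj (a, b) then 1 else 0 := by
  induction l with
  | nil => simp [numAdj_cons_cons]
  | cons c l ih =>
    cases l with
    | nil => simp [numAdj_cons_cons, Nat.add_comm]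
    | cons d l =>
      simp only [List.cons_append, numAdj_cons_cons] at *
      rw [ih]; omega

lemma numAdj_reverse (l : List ℕ) : numAdj l.reverse = numAdj l := by
  induction l with
  | nil => rfl
  | cons a l ih =>
    cases l with
    | nil => rfl
    | cons b l =>
      rw [List.reverse_cons, List.reverse_cons, numAdj_concat, ← List.reverse_cons, ih,
        numAdj_cons_cons, isAdj_swap]

lemma numAdj_append_le (l₁ l₂ : List ℕ) : numAdj (l₁ ++ l₂) ≤ numAdj l₁ + numAdj l₂ + 1 := by
  induction l₁ with
  | nil => simp
  | cons a l₁ ih =>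
    rcases l₁ with _ | ⟨b, l₁⟩
    · rcases l₂ with _ | ⟨b, l₂⟩
      · simp [numAdj]
      · rw [List.singleton_append, numAdj_cons_cons]; split <;> simp
    · simp only [List.cons_append, numAdj_cons_cons] at *
      omega

lemma numAdj_add_le_append (l₁ l₂ : List ℕ) : numAdj l₁ + numAdj l₂ ≤ numAdj (l₁ ++ l₂) := by
  induction l₁ with
  | nil => simp [numAdj]
  | cons a l₁ ih =>
    rcases l₁ with _ | ⟨b, l₁⟩
    · rcases l₂ with _ | ⟨b, l₂⟩
      · simp [numAdj]
      · rw [List.singleton_append, numAdj_cons_cons]; simp [numAdj]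
    · simp only [List.cons_append, numAdj_cons_cons] at *
      omega

lemma numAdj_uflip_le (i : ℕ) (C : List ℕ) : numAdj (uflip i C) ≤ numAdj C + 1 := by
  have hsplit := numAdj_add_le_append (C.take i) (C.drop i)
  rw [List.take_append_drop] at hsplit
  calc numAdj (uflip i C)
      ≤ numAdj (C.take i).reverse + numAdj (C.drop i) + 1 := numAdj_append_le _ _
    _ ≤ numAdj C + 1 := by rw [numAdj_reverse]; omega

lemma length_uflip (i : ℕ) (C : List ℕ) : (uflip i C).length = C.length := by
  simp [uflip]; omega

lemma uflip_of_length_le {i : ℕ} {C : List ℕ} (h : C.length ≤ i) : uflip i C = C.reverse := by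
  simp [uflip, List.take_of_length_le h, List.drop_of_length_le h]

lemma aU_uflip_le (i : ℕ) (C : List ℕ) : aU (uflip i C) ≤ aU C + 1 := by
  rw [aU_eq_numAdj_add, aU_eq_numAdj_add, length_uflip]
  by_cases hi : i < C.length
  · have hlast : (uflip i C).getLast? = C.getLast? := by
      have hne : C.drop i ≠ [] := by simpa using hi
      rw [uflip, List.getLast?_append_of_ne_nil _ hne,
        ← List.getLast?_append_of_ne_nil (C.take i) hne, List.take_append_drop]
    have := numAdj_uflip_le i C
    rw [hlast]; omega
  · rw [uflip_of_length_le (not_lt.mp hi), numAdj_reverse]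
    split <;> split <;> omega

lemma uflip_perm (i : ℕ) (C : List ℕ) : (uflip i C).Perm C := by
  conv_rhs => rw [← List.take_append_drop i C]
  exact (List.reverse_perm _).append_right _

def uflips (s : List ℕ) (C : List ℕ) : List ℕ := s.foldl (fun D i => uflip i D) C

lemma uflips_append (s t : List ℕ) (C : List ℕ) : uflips (s ++ t) C = uflips t (uflips s C) :=
  List.foldl_append

lemma aU_uflips_le (s : List ℕ) (C : List ℕ) : aU (uflips s C) ≤ aU C + s.length := by
  induction s generalizing C with
  | nil => simp [uflips]
  | cons i s ih =>
    have hfirst := aU_uflip_le i C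
    have hrest := ih (uflip i C)
    simp only [uflips, List.foldl_cons, List.length_cons] at *
    omega

lemma uflips_perm (s : List ℕ) (C : List ℕ) : (uflips s C).Perm C := by
  induction s generalizing C with
  | nil => rfl
  | cons i s ih => exact (ih (uflip i C)).trans (uflip_perm i C)

lemma uflip_append_of_le_length {i : ℕ} {D : List ℕ} (E : List ℕ) (h : i ≤ D.length) :
    uflip i (D ++ E) = uflip i D ++ E := by
  rw [uflip, uflip, List.take_append_of_le_length h, List.drop_append_of_le_length h,
    List.append_assoc]

lemma uflips_append_of_forall_le {s D : List ℕ} (E : List ℕ) (h : ∀ i ∈ s, i ≤ D.length) :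
    uflips s (D ++ E) = uflips s D ++ E := by
  induction s generalizing D with
  | nil => rfl
  | cons i s ih =>
    simp only [List.mem_cons, forall_eq_or_imp] at h
    simp only [uflips, List.foldl_cons] at *
    rw [uflip_append_of_le_length E h.1, ih]
    simpa [length_uflip] using h.2

lemma uflip_uflip_append_cons (L R : List ℕ) (x : ℕ) :
    uflip (L.length + R.length + 1) (uflip (L.length + 1) (L ++ x :: R)) =
      (L.reverse ++ R).reverse ++ [x] := by
  have hfirst : uflip (L.length + 1) (L ++ x :: R) = x :: (L.reverse ++ R) := by
    rw [uflip, ← List.singleton_append, ← List.append_assoc, List.take_left' (by simp),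
      List.drop_left' (by simp)]
    simp
  rw [hfirst, uflip_of_length_le (by simp), List.reverse_cons]

lemma uId_succ (n : ℕ) : uId (n + 1) = uId n ++ [n + 1] := by
  simp [uId, List.range_succ]

lemma length_uId (n : ℕ) : (uId n).length = n := by simp [uId]

lemma numAdj_uId (n : ℕ) : numAdj (uId n) = n - 1 := by
  induction n with
  | zero => rfl
  | succ n ih =>
    rcases n with _ | n
    · rfl
    rw [uId_succ, uId_succ, numAdj_concat, ← uId_succ, ih]
    simp [isAdj]

lemma aU_uId (n : ℕ) : aU (uId n) = n := by
  rcases n with _ | n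
  · rfl
  rw [aU_eq_numAdj_add, numAdj_uId, length_uId, uId_succ, List.getLast?_concat]
  simp

lemma exists_uflips_eq_uId (n : ℕ) (C : List ℕ) (h : C.Perm (uId n)) :
    ∃ s : List ℕ, (∀ i ∈ s, 1 ≤ i ∧ i ≤ n) ∧ uflips s C = uId n := by
  induction n generalizing C with
  | zero => exact ⟨[], by simp, by simpa [uflips, uId] using h⟩
  | succ n ih =>
    obtain ⟨L, R, rfl⟩ := List.append_of_mem (a := n + 1) (h.mem_iff.mpr (by simp [uId_succ]))
    have hlen : L.length + R.length = n := by simpa [length_uId, ← Nat.add_assoc] using h.length_eq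
    -- flip the largest pancake to the top, then to the bottom
    set D := (L.reverse ++ R).reverse
    have hD : uflips [L.length + 1, n + 1] (L ++ (n + 1) :: R) = D ++ [n + 1] := by
      simp only [uflips, List.foldl_cons, List.foldl_nil, ← hlen, uflip_uflip_append_cons, D]
    have hDperm : D.Perm (uId n) := by
      rw [← List.perm_append_right_iff [n + 1], ← uId_succ, ← hD]
      exact (uflips_perm _ _).trans h
    obtain ⟨s, hs, hsort⟩ := ih D hDperm
    refine ⟨[L.length + 1, n + 1] ++ s, ?_, ?_⟩
    · simp only [List.mem_append, List.mem_cons, List.not_mem_nil, or_false]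
      rintro i ((rfl | rfl) | hi)
      · omega
      · omega
      · exact (hs i hi).imp id (by omega)
    · rw [uflips_append, hD, uflips_append_of_forall_le, hsort, uId_succ]
      simpa [hDperm.length_eq, length_uId] using fun i hi => (hs i hi).2

lemma le_fU_add_aU {n : ℕ} {C : List ℕ} (h : C.Perm (uId n)) : n ≤ fU C + aU C := by
  have hlen : C.length = n := by simpa [length_uId] using h.length_eq
  obtain ⟨s, hs, hsort⟩ := exists_uflips_eq_uId n C h
  have hfU : fU C ∈ {m | ∃ s : List ℕ,
      (∀ i ∈ s, 1 ≤ i ∧ i ≤ C.length) ∧ s.length = m ∧ uflips s C = uId C.length} :=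
    Nat.sInf_mem ⟨s.length, s, hlen ▸ hs, rfl, hlen ▸ hsort⟩
  obtain ⟨s₀, -, hs₀, hsort₀⟩ := hfU
  have hbound := aU_uflips_le s₀ C
  rw [hsort₀, aU_uId, hs₀, hlen] at hbound
  exact hbound.trans_eq (Nat.add_comm _ _)

lemma toUStack_eq_ofFn {n : ℕ} (π : Equiv.Perm (Fin n)) :
    toUStack π = List.ofFn fun j => (π j : ℕ) + 1 := by
  rw [toUStack, List.ofFn_eq_map]

lemma toUStack_perm {n : ℕ} (π : Equiv.Perm (Fin n)) : (toUStack π).Perm (uId n) := by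
  have huId : uId n = List.ofFn fun j : Fin n => (j : ℕ) + 1 := by
    rw [List.ofFn_eq_map, uId, ← List.map_coe_finRange_eq_range, List.map_map]; rfl
  rw [toUStack_eq_ofFn, huId]
  exact π.ofFn_comp_perm fun j => (j : ℕ) + 1

section PermCount

variable {α : Type*} [Fintype α] [DecidableEq α]

lemma card_filter_forall_mem_apply_eq_self (A : Finset α) :
    #{π : Equiv.Perm α | ∀ x ∈ A, π x = x} = (Fintype.card α - #A).factorial := by
  rw [← Fintype.card_subtype, ← Fintype.card_coe A, ← Fintype.card_subtype_compl,
    ← Fintype.card_perm]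
  refine Fintype.card_congr ((Equiv.subtypeEquivRight fun π => ?_).trans
    (Equiv.Perm.subtypeEquivSubtypePerm fun x => x ∉ A).symm)
  simp

lemma card_filter_forall_mem_apply_eq_le (A : Finset α) (t : α → α) :
    #{π : Equiv.Perm α | ∀ x ∈ A, π x = t x} ≤ (Fintype.card α - #A).factorial := by
  rcases Finset.eq_empty_or_nonempty {π : Equiv.Perm α | ∀ x ∈ A, π x = t x} with h | ⟨π₀, h₀⟩
  · simp [h]
  rw [← card_filter_forall_mem_apply_eq_self]
  refine card_le_card_of_injOn (π₀⁻¹ * ·) (fun π hπ => ?_) (mul_right_injective _).injOn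
  simp only [coe_filter, mem_univ, true_and, Set.mem_ofPred_eq, mem_filter] at h₀ hπ ⊢
  intro x hx
  simp [hπ x hx, ← h₀ x hx]

lemma card_filter_apply_eq_le (a u : α) :
    #{π : Equiv.Perm α | π a = u} ≤ (Fintype.card α - 1).factorial := by
  simpa using card_filter_forall_mem_apply_eq_le {a} fun _ => u

lemma card_filter_apply_eq_and_apply_eq_le {a b : α} (hab : a ≠ b) (u v : α) :
    #{π : Equiv.Perm α | π a = u ∧ π b = v} ≤ (Fintype.card α - 2).factorial := by
  have := card_filter_forall_mem_apply_eq_le {a, b} fun x => if x = a then u else v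
  simpa [Finset.card_pair hab, hab.symm] using this

end PermCount

lemma card_filter_val_apply_eq_val_apply_add_one_le {m : ℕ} {a b : Fin (m + 1)} (hab : a ≠ b) :
    #{π : Equiv.Perm (Fin (m + 1)) | (π b : ℕ) = π a + 1} ≤ m.factorial := by
  have hcover : ({π | (π b : ℕ) = π a + 1} : Finset (Equiv.Perm (Fin (m + 1)))) ⊆
      univ.biUnion fun v : Fin m =>
        {π : Equiv.Perm (Fin (m + 1)) | π a = v.castSucc ∧ π b = v.succ} := by
    intro π hπ
    simp only [mem_filter, mem_univ, true_and, mem_biUnion] at hπ ⊢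
    exact ⟨⟨π a, by omega⟩, Fin.ext rfl, Fin.ext (by simp [hπ])⟩
  calc _ ≤ _ := card_le_card hcover
    _ ≤ ∑ v : Fin m, #{π : Equiv.Perm (Fin (m + 1)) | π a = v.castSucc ∧ π b = v.succ} :=
      card_biUnion_le
    _ ≤ ∑ _v : Fin m, (m - 1).factorial :=
      sum_le_sum fun v _ => by simpa using card_filter_apply_eq_and_apply_eq_le hab _ _
    _ ≤ m.factorial := by
      rcases m with _ | m <;> simp [Nat.factorial_succ]

lemma card_filter_isAdj_le {m : ℕ} {a b : Fin (m + 1)} (hab : a ≠ b) :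
    #{π : Equiv.Perm (Fin (m + 1)) | isAdj ((π a : ℕ) + 1, (π b : ℕ) + 1)} ≤
      2 * m.factorial := by
  have hsplit : #{π : Equiv.Perm (Fin (m + 1)) | isAdj ((π a : ℕ) + 1, (π b : ℕ) + 1)} =
      #(({π | (π b : ℕ) = π a + 1} : Finset (Equiv.Perm (Fin (m + 1)))) ∪
        ({π | (π a : ℕ) = π b + 1} : Finset (Equiv.Perm (Fin (m + 1))))) := by
    congr 1
    ext π
    simp only [isAdj, mem_filter, mem_univ, true_and, mem_union, Bool.or_eq_true, beq_iff_eq]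
    omega
  rw [hsplit, two_mul]
  exact (card_union_le _ _).trans (add_le_add (card_filter_val_apply_eq_val_apply_add_one_le hab)
    (card_filter_val_apply_eq_val_apply_add_one_le hab.symm))

lemma numAdj_ofFn {m : ℕ} (f : Fin (m + 1) → ℕ) :
    numAdj (List.ofFn f) = ∑ j : Fin m, if isAdj (f j.castSucc, f j.succ) then 1 else 0 := by
  induction m with
  | zero => simp
  | succ m ih =>
    have htail := ih fun i => f i.succ
    rw [List.ofFn_succ] at htail
    rw [List.ofFn_succ, List.ofFn_succ, numAdj_cons_cons, htail, Fin.sum_univ_succ, Nat.add_comm]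
    rfl

lemma aU_toUStack {m : ℕ} (π : Equiv.Perm (Fin (m + 1))) :
    aU (toUStack π) =
      (∑ j : Fin m, if isAdj ((π j.castSucc : ℕ) + 1, (π j.succ : ℕ) + 1) then 1 else 0) +
        if π (Fin.last m) = Fin.last m then 1 else 0 := by
  rw [aU_eq_numAdj_add, toUStack_eq_ofFn, numAdj_ofFn, List.length_ofFn, List.ofFn_succ',
    List.concat_eq_append, List.getLast?_concat]
  simp [Fin.ext_iff]

lemma sum_aU_toUStack_le (n : ℕ) :
    ∑ π : Equiv.Perm (Fin n), aU (toUStack π) ≤ 2 * n.factorial := by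
  rcases n with _ | m
  · decide
  simp only [aU_toUStack, sum_add_distrib]
  rw [sum_comm]
  simp only [← card_filter]
  have hadj : ∑ j : Fin m,
      #{π : Equiv.Perm (Fin (m + 1)) | isAdj ((π j.castSucc : ℕ) + 1, (π j.succ : ℕ) + 1)} ≤
        m * (2 * m.factorial) := by
    simpa using sum_le_sum fun j (_ : j ∈ univ) =>
      card_filter_isAdj_le (Fin.castSucc_lt_succ (i := j)).ne
  have hlast := card_filter_apply_eq_le (Fin.last m) (Fin.last m)
  rw [Fintype.card_fin, Nat.add_sub_cancel] at hlast
  rw [Nat.factorial_succ]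
  nlinarith

theorem average_fU_lower_bound_general (n : ℕ) :
    (n : ℚ) - 2 ≤
      (∑ π : Equiv.Perm (Fin n), (fU (toUStack π) : ℚ)) / n.factorial := by
  have hsum : n * n.factorial ≤ ∑ π : Equiv.Perm (Fin n), fU (toUStack π) + 2 * n.factorial :=
    calc n * n.factorial = ∑ _π : Equiv.Perm (Fin n), n := by simp [Fintype.card_perm, mul_comm]
      _ ≤ ∑ π : Equiv.Perm (Fin n), (fU (toUStack π) + aU (toUStack π)) :=
        sum_le_sum fun π _ => le_fU_add_aU (toUStack_perm π)
      _ ≤ _ := by rw [sum_add_distrib]; exact add_le_add_right (sum_aU_toUStack_le n) _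
  rw [le_div_iff₀ (by positivity)]
  have hsumℚ : (n * n.factorial : ℚ) ≤
      ∑ π : Equiv.Perm (Fin n), (fU (toUStack π) : ℚ) + 2 * n.factorial := by
    exact_mod_cast hsum
  linarith

/-- For every positive integer `n`, the average over all `n!`
permutations `π` of `{1,…,n}` of the minimum number of prefix reversals `f(π)` needed
to sort `π` is at least `n − 2`. -/
theorem average_fU_lower_bound (n : ℕ) (hn : 1 ≤ n) :
    (n : ℚ) - 2 ≤
      (∑ π : Equiv.Perm (Fin n), (fU (toUStack π) : ℚ)) / n.factorial :=
  average_fU_lower_bound_general n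
end
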